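/- arXiv:2602.22882 — 6 statements merged into one kernel-verified Lean document; each statement's English description precedes it below -/
import Mathlib

section
/- Rigidity of vector-valued Shapley operators: Let n, m be positive integers and let Φ be a vector-valued value operator on 𝒢ₙᵐ satisfying efficiency, symmetry, dummy, and additivity. Then there exists a scalar value operator φ : 𝒢ₙ → ℝⁿ such that for all v ∈ 𝒢ₙᵐ and all i ∈ {1,…,n}, Φᵢ(v) = (φᵢ(π₁∘v), …, φᵢ(πₘ∘v)), where πₖ : ℝᵐ → ℝ is the k-th coordinate projection; in particular, for every k ∈ {1,…,m}, the k-th coordinate of Φᵢ(v) depends only on the k-th coordinate of v. -/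
open Finset

/-- Efficiency axiom for a vector-valued value operator on games
`v : 𝒫([n]) → ℝᵐ` with `v ∅ = 0`. -/
def IsEfficient (n m : ℕ) (Φ : (Finset (Fin n) → (Fin m → ℝ)) → (Fin n → Fin m → ℝ)) : Prop :=
  ∀ v : Finset (Fin n) → (Fin m → ℝ), v ∅ = 0 → ∑ i : Fin n, Φ v i = v Finset.univ

/-- Symmetry axiom. -/
def IsSymmetric (n m : ℕ) (Φ : (Finset (Fin n) → (Fin m → ℝ)) → (Fin n → Fin m → ℝ)) : Prop :=
  ∀ v : Finset (Fin n) → (Fin m → ℝ), v ∅ = 0 → ∀ i j : Fin n,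
    (∀ S : Finset (Fin n), i ∉ S → j ∉ S → v (insert i S) = v (insert j S)) →
    Φ v i = Φ v j

/-- Dummy (null player) axiom. -/
def IsDummy (n m : ℕ) (Φ : (Finset (Fin n) → (Fin m → ℝ)) → (Fin n → Fin m → ℝ)) : Prop :=
  ∀ v : Finset (Fin n) → (Fin m → ℝ), v ∅ = 0 → ∀ i : Fin n,
    (∀ S : Finset (Fin n), i ∉ S → v (insert i S) = v S) → Φ v i = 0

/-- Additivity (linearity) axiom. -/
def IsAdditive (n m : ℕ) (Φ : (Finset (Fin n) → (Fin m → ℝ)) → (Fin n → Fin m → ℝ)) : Prop :=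
  ∀ v w : Finset (Fin n) → (Fin m → ℝ), v ∅ = 0 → w ∅ = 0 → ∀ α β : ℝ,
    Φ (α • v + β • w) = α • Φ v + β • Φ w


section Aux

variable {n m : ℕ}

/-- Harsanyi dividend of a scalar game. -/
noncomputable def gdiv (T : Finset (Fin n)) (u : Finset (Fin n) → ℝ) : ℝ :=
  ∑ R ∈ T.powerset, (-1 : ℝ) ^ (T.card - R.card) * u R

/-- basis (unanimity-type) vector game. -/
noncomputable def basisGame (T : Finset (Fin n)) (k : Fin m) :
    Finset (Fin n) → (Fin m → ℝ) :=
  fun S => if T ⊆ S then Pi.single k 1 else 0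

lemma sum_powerset_neg_one_pow_card_real {α : Type*} [DecidableEq α] (Y : Finset α) :
    ∑ X ∈ Y.powerset, (-1 : ℝ) ^ X.card = if Y = ∅ then 1 else 0 := by
  have h := Finset.sum_powerset_neg_one_pow_card (x := Y)
  have h2 := congrArg (fun z : ℤ => (z : ℝ)) h
  push_cast at h2
  rw [h2]

lemma mobius (u : Finset (Fin n) → ℝ) (S : Finset (Fin n)) :
    ∑ T ∈ S.powerset, gdiv T u = u S := by
  simp only [gdiv]
  have step1 : ∀ T ∈ S.powerset,
      ∑ R ∈ T.powerset, (-1:ℝ)^(T.card - R.card) * u R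
        = ∑ R ∈ S.powerset, if R ⊆ T then (-1:ℝ)^(T.card - R.card) * u R else 0 := by
    intro T hT
    rw [← Finset.sum_filter]
    apply Finset.sum_congr _ (fun _ _ => rfl)
    ext R
    simp only [Finset.mem_filter, Finset.mem_powerset]
    exact ⟨fun h => ⟨h.trans (Finset.mem_powerset.mp hT), h⟩, fun h => h.2⟩
  rw [Finset.sum_congr rfl step1, Finset.sum_comm]
  have step2 : ∀ R ∈ S.powerset,
      (∑ T ∈ S.powerset, if R ⊆ T then (-1:ℝ)^(T.card - R.card) * u R else 0)
        = (if R = S then u S else 0) := by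
    intro R hR
    have hRS : R ⊆ S := Finset.mem_powerset.mp hR
    rw [← Finset.sum_filter, ← Finset.sum_mul]
    have key : (∑ T ∈ S.powerset.filter (fun T => R ⊆ T), (-1:ℝ)^(T.card - R.card))
        = if S \ R = ∅ then 1 else 0 := by
      rw [← sum_powerset_neg_one_pow_card_real (S \ R)]
      refine Finset.sum_nbij' (fun T => T \ R) (fun X => X ∪ R) ?_ ?_ ?_ ?_ ?_
      · intro T hT
        rw [Finset.mem_filter, Finset.mem_powerset] at hT
        exact Finset.mem_powerset.mpr (Finset.sdiff_subset_sdiff hT.1 (Finset.Subset.refl R))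
      · intro X hX
        rw [Finset.mem_powerset] at hX
        rw [Finset.mem_filter, Finset.mem_powerset]
        exact ⟨Finset.union_subset (hX.trans (Finset.sdiff_subset)) hRS,
          Finset.subset_union_right⟩
      · intro T hT
        rw [Finset.mem_filter] at hT
        exact Finset.sdiff_union_of_subset hT.2
      · intro X hX
        rw [Finset.mem_powerset] at hX
        exact Finset.union_sdiff_cancel_right
          ((Finset.sdiff_disjoint (s := R) (t := S)).mono_left hX)
      · intro T hT
        rw [Finset.mem_filter] at hT
        rw [Finset.card_sdiff_of_subset hT.2]
    rw [key]
    have hiff : S \ R = ∅ ↔ R = S := by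
      rw [Finset.sdiff_eq_empty_iff_subset]
      exact ⟨fun h => Finset.Subset.antisymm hRS h, fun h => h ▸ Finset.Subset.refl S⟩
    by_cases h : R = S
    · rw [if_pos (hiff.mpr h), if_pos h, one_mul, h]
    · rw [if_neg (fun hh => h (hiff.mp hh)), if_neg h, zero_mul]
  rw [Finset.sum_congr rfl step2, Finset.sum_ite_eq' S.powerset S (fun _ => u S),
    if_pos (Finset.mem_powerset_self S)]

lemma Phi_zero {Φ : (Finset (Fin n) → (Fin m → ℝ)) → (Fin n → Fin m → ℝ)}
    (hadd : IsAdditive n m Φ) : Φ 0 = 0 := by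
  have h := hadd 0 0 rfl rfl 1 1
  simp only [smul_zero, add_zero, one_smul] at h
  have h2 : Φ 0 + 0 = Φ 0 + Φ 0 := by rw [add_zero]; exact h
  exact (add_left_cancel h2).symm

lemma Phi_sum {Φ : (Finset (Fin n) → (Fin m → ℝ)) → (Fin n → Fin m → ℝ)}
    (hadd : IsAdditive n m Φ) {ι : Type*} [DecidableEq ι] (s : Finset ι)
    (c : ι → ℝ) (F : ι → (Finset (Fin n) → Fin m → ℝ)) (hF : ∀ p ∈ s, F p ∅ = 0) :
    Φ (∑ p ∈ s, c p • F p) = ∑ p ∈ s, c p • Φ (F p) := by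
  induction s using Finset.induction_on with
  | empty => simpa using Phi_zero hadd
  | insert a s ha ih =>
    rw [Finset.sum_insert ha]
    have hsum0 : (∑ p ∈ s, c p • F p) ∅ = 0 := by
      simp only [Finset.sum_apply, Pi.smul_apply]
      exact Finset.sum_eq_zero fun p hp => by
        rw [hF p (Finset.mem_insert_of_mem hp), smul_zero]
    have h := hadd (F a) (∑ p ∈ s, c p • F p) (hF a (Finset.mem_insert_self a s)) hsum0
      (c a) 1
    rw [one_smul, one_smul] at h
    rw [h, ih (fun p hp => hF p (Finset.mem_insert_of_mem hp)), Finset.sum_insert ha]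

lemma Phi_basis {Φ : (Finset (Fin n) → (Fin m → ℝ)) → (Fin n → Fin m → ℝ)}
    (heff : IsEfficient n m Φ) (hsym : IsSymmetric n m Φ) (hdum : IsDummy n m Φ)
    (T : Finset (Fin n)) (hT : T ≠ ∅) (k : Fin m) (i : Fin n) :
    Φ (basisGame T k) i = if i ∈ T then ((T.card : ℝ))⁻¹ • (Pi.single k 1 : Fin m → ℝ) else 0 := by
  have h0 : basisGame T k ∅ = 0 := by
    simp [basisGame, Finset.subset_empty, hT]
  have hdummy : ∀ j, j ∉ T → Φ (basisGame T k) j = 0 := by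
    intro j hj
    refine hdum _ h0 j fun S hjS => ?_
    simp [basisGame, Finset.subset_insert_iff_of_notMem hj]
  have hsame : ∀ i₁ ∈ T, ∀ j₁ ∈ T, Φ (basisGame T k) i₁ = Φ (basisGame T k) j₁ := by
    intro i₁ hi₁ j₁ hj₁
    rcases eq_or_ne i₁ j₁ with rfl | hij
    · rfl
    refine hsym _ h0 i₁ j₁ fun S hiS hjS => ?_
    have h1 : ¬ T ⊆ insert i₁ S := fun h => by
      rcases Finset.mem_insert.mp (h hj₁) with h' | h'
      · exact hij h'.symm
      · exact hjS h'
    have h2 : ¬ T ⊆ insert j₁ S := fun h => by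
      rcases Finset.mem_insert.mp (h hi₁) with h' | h'
      · exact hij h'
      · exact hiS h'
    simp [basisGame, h1, h2]
  obtain ⟨i₀, hi₀⟩ := Finset.nonempty_iff_ne_empty.mpr hT
  have hsumT : ∑ j ∈ T, Φ (basisGame T k) j = Pi.single k 1 := by
    rw [Finset.sum_subset (Finset.subset_univ T) (fun j _ hj => hdummy j hj), heff _ h0]
    simp [basisGame]
  have hcard : (T.card : ℝ) ≠ 0 := by
    exact_mod_cast Finset.card_ne_zero_of_mem hi₀
  have hval : Φ (basisGame T k) i₀ = ((T.card : ℝ))⁻¹ • (Pi.single k 1 : Fin m → ℝ) := by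
    have h3 : ∑ j ∈ T, Φ (basisGame T k) j = T.card • Φ (basisGame T k) i₀ := by
      rw [Finset.sum_congr rfl (fun j hj => hsame j hj i₀ hi₀), Finset.sum_const]
    rw [h3] at hsumT
    rw [← Nat.cast_smul_eq_nsmul ℝ] at hsumT
    rw [← hsumT, smul_smul, inv_mul_cancel₀ hcard, one_smul]
  by_cases hi : i ∈ T
  · rw [if_pos hi, hsame i hi i₀ hi₀, hval]
  · rw [if_neg hi, hdummy i hi]

lemma decomp (v : Finset (Fin n) → (Fin m → ℝ)) (hv : v ∅ = 0) :
    v = ∑ p ∈ ((univ : Finset (Fin n)).powerset.filter (fun T => T ≠ ∅)) ×ˢ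
          (univ : Finset (Fin m)),
        gdiv p.1 (fun S => v S p.2) • basisGame p.1 p.2 := by
  funext S k
  simp only [Finset.sum_apply, Pi.smul_apply, smul_eq_mul]
  rw [Finset.sum_product]
  have inner : ∀ T : Finset (Fin n),
      (∑ k' : Fin m, gdiv T (fun S => v S k') * basisGame T k' S k)
        = if T ⊆ S then gdiv T (fun S => v S k) else 0 := by
    intro T
    by_cases hTS : T ⊆ S
    · rw [if_pos hTS]
      have : ∀ k' : Fin m, basisGame T k' S k = if k = k' then 1 else 0 := by
        intro k'
        simp [basisGame, hTS, Pi.single_apply]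
      simp only [this, mul_ite, mul_one, mul_zero]
      rw [Finset.sum_ite_eq univ k (fun k' => gdiv T (fun S => v S k')), if_pos (Finset.mem_univ k)]
    · rw [if_neg hTS]
      refine Finset.sum_eq_zero fun k' _ => ?_
      simp [basisGame, hTS]
  rw [Finset.sum_congr rfl (fun T _ => inner T)]
  have e1 : ∑ T ∈ (univ : Finset (Fin n)).powerset.filter (fun T => T ≠ ∅),
      (if T ⊆ S then gdiv T (fun S => v S k) else 0)
      = ∑ T ∈ (univ : Finset (Fin n)).powerset,
        (if T ⊆ S then (if T = ∅ then 0 else gdiv T (fun S => v S k)) else 0) := by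
    rw [Finset.sum_filter]
    refine Finset.sum_congr rfl fun T _ => ?_
    by_cases h1 : T = ∅ <;> by_cases h2 : T ⊆ S <;> simp [h1, h2]
  rw [e1, ← Finset.sum_filter]
  have e2 : (univ : Finset (Fin n)).powerset.filter (fun T => T ⊆ S) = S.powerset := by
    ext T
    simp [Finset.mem_powerset]
  rw [e2]
  have e3 : ∀ T ∈ S.powerset, (if T = ∅ then 0 else gdiv T (fun S => v S k))
      = gdiv T (fun S => v S k) := by
    intro T _
    by_cases h : T = ∅
    · subst h
      have : gdiv (∅ : Finset (Fin n)) (fun S => v S k) = 0 := by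
        simp [gdiv]
        have : v ∅ k = 0 := by rw [hv]; rfl
        simpa using this
      rw [this, if_pos rfl]
    · rw [if_neg h]
  rw [Finset.sum_congr rfl e3, mobius]

end Aux
/-- **Rigidity of vector-valued Shapley operators.**  Any vector-valued value operator
satisfying efficiency, symmetry, dummy, and additivity acts coordinate-wise: there is a
scalar value operator `φ` such that `Φᵢ(v) = (φᵢ(π₁∘v),…,φᵢ(πₘ∘v))`. -/
theorem rigidity_of_vector_valued_Shapley_operators
    (n m : ℕ) (hn : 0 < n) (hm : 0 < m)
    (Φ : (Finset (Fin n) → (Fin m → ℝ)) → (Fin n → Fin m → ℝ))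
    (heff : IsEfficient n m Φ) (hsym : IsSymmetric n m Φ)
    (hdum : IsDummy n m Φ) (hadd : IsAdditive n m Φ) :
    ∃ φ : (Finset (Fin n) → ℝ) → (Fin n → ℝ),
      ∀ v : Finset (Fin n) → (Fin m → ℝ), v ∅ = 0 →
        ∀ i : Fin n, ∀ k : Fin m, Φ v i k = φ (fun S => v S k) i := by
  classical
  refine ⟨fun u i => ∑ T ∈ (univ : Finset (Fin n)).powerset.filter (fun T => T ≠ ∅),
      (if i ∈ T then ((T.card : ℝ))⁻¹ * gdiv T u else 0), ?_⟩
  intro v hv i k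
  set P := ((univ : Finset (Fin n)).powerset.filter (fun T => T ≠ ∅)) ×ˢ
      (univ : Finset (Fin m)) with hP
  have hB : ∀ p ∈ P, basisGame (m := m) p.1 p.2 ∅ = 0 := by
    intro p hp
    have h1 : p.1 ≠ ∅ := (Finset.mem_filter.mp (Finset.mem_product.mp hp).1).2
    simp [basisGame, Finset.subset_empty, h1]
  have hlin := Phi_sum hadd P (fun p => gdiv p.1 (fun S => v S p.2))
      (fun p => basisGame p.1 p.2) hB
  rw [show Φ v i k = Φ (∑ p ∈ P, gdiv p.1 (fun S => v S p.2) • basisGame p.1 p.2) i k from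
    by rw [← decomp v hv], hlin]
  simp only [Finset.sum_apply, Pi.smul_apply, smul_eq_mul]
  rw [Finset.sum_product]
  refine Finset.sum_congr rfl fun T hT => ?_
  have hTne : T ≠ ∅ := (Finset.mem_filter.mp hT).2
  have hval : ∀ k' : Fin m, Φ (basisGame T k') i k
      = if i ∈ T then ((T.card : ℝ))⁻¹ * (if k = k' then 1 else 0) else 0 := by
    intro k'
    rw [Phi_basis heff hsym hdum T hTne k' i]
    by_cases hi : i ∈ T
    · simp [hi, Pi.single_apply]
    · simp [hi]
  simp only [hval]
  by_cases hi : i ∈ T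
  · simp only [if_pos hi, mul_ite, mul_one, mul_zero]
    rw [Finset.sum_ite_eq univ k
      (fun k' => gdiv T (fun S => v S k') * ((T.card : ℝ))⁻¹), if_pos (Finset.mem_univ k)]
    ring
  · simp [hi]
end

section
/- Existence and uniqueness of the vector-valued Shapley operator: For all positive integers n, m there exists a unique vector-valued value operator Φ : 𝒢ₙᵐ → (ℝᵐ)ⁿ satisfying efficiency, symmetry, dummy, and additivity. Moreover, for every game v ∈ 𝒢ₙᵐ and every player i ∈ {1,…,n}, this operator is given by the permutation formula Φᵢ(v) = (1/n!) Σ_{π ∈ Sₙ} [v(Pᵢ(π) ∪ {i}) − v(Pᵢ(π))] ∈ ℝᵐ, where Sₙ is the set of permutations of [n] and Pᵢ(π) is the set of players preceding i in the permutation π. -/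
/-!
Existence: along any ordering of the players the marginal contributions telescope to `v [n]`,
which gives efficiency of the permutation formula, and relabelling the orderings by the
transposition `(i j)` exchanges the contributions of two symmetric players.

Uniqueness: every game is the sum of the unanimity games `u_T(S) = [T ⊆ S]` weighted by its
Harsanyi dividends, the Möbius transform of `v` on the lattice of coalitions. On a weighted
unanimity game efficiency, symmetry and dummy force an equal split of the weight among the
members of `T`, so by additivity any value operator equals `∑_{T ∋ i} d_T / |T|`.
-/

open Finset

/-- `preceding n π i` is the set `Pᵢ(π)` of players preceding `i` in the ordering
given by the permutation `π` of `[n]`. -/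
def preceding (n : ℕ) (π : Equiv.Perm (Fin n)) (i : Fin n) : Finset (Fin n) :=
  Finset.univ.filter fun j => π.symm j < π.symm i

/-- The permutation formula for the vector-valued Shapley value:
`Φᵢ(v) = (1/n!) Σ_{π ∈ Sₙ} [v(Pᵢ(π) ∪ {i}) − v(Pᵢ(π))]`. -/
noncomputable def permShap (n m : ℕ) (v : Finset (Fin n) → (Fin m → ℝ)) (i : Fin n) :
    Fin m → ℝ :=
  ((Nat.factorial n : ℝ))⁻¹ •
    ∑ π : Equiv.Perm (Fin n), (v (insert i (preceding n π i)) - v (preceding n π i))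

open IncidenceAlgebra

section Moebius
variable {α M : Type*} [PartialOrder α] [LocallyFiniteOrder α] [OrderBot α] [DecidableEq α]
  [AddCommGroup M]

def moebiusTransform (g : α → M) (x : α) : M := ∑ y ∈ Iic x, mu ℤ y x • g y

lemma moebiusTransform_bot (g : α → M) : moebiusTransform g ⊥ = g ⊥ := by
  simp [moebiusTransform]

lemma sum_Iic_moebiusTransform (g : α → M) (x : α) :
    ∑ y ∈ Iic x, moebiusTransform g y = g x := by
  unfold moebiusTransform
  -- the inner sums `∑_{y ≤ z ≤ x} μ(y, z)` vanish unless `y = x`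
  rw [sum_comm' (t' := Iic x) (s' := fun z => Icc z x) (by
    intro y z; simp only [mem_Iic, mem_Icc]
    exact ⟨fun h => ⟨⟨h.2, h.1⟩, h.2.trans h.1⟩, fun h => ⟨h.1.2, h.1.1⟩⟩)]
  simp_rw [← sum_smul, sum_Icc_mu_right, ite_smul, one_smul, zero_smul]
  simp

end Moebius

section Unanimity
variable {α M : Type*} [DecidableEq α] [AddCommGroup M]

def unanimityGame (T : Finset α) (c : M) (S : Finset α) : M := if T ⊆ S then c else 0

lemma unanimityGame_insert_of_notMem {T : Finset α} {i : α} (hi : i ∉ T) (c : M)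
    (S : Finset α) : unanimityGame T c (insert i S) = unanimityGame T c S := by
  simp only [unanimityGame, subset_insert_iff_of_notMem hi]

lemma unanimityGame_insert_of_mem {T S : Finset α} {i j : α} (hi : i ∈ T) (hj : j ∈ T)
    (hiS : i ∉ S) (hjS : j ∉ S) (c : M) :
    unanimityGame T c (insert i S) = unanimityGame T c (insert j S) := by
  rcases eq_or_ne i j with rfl | hij
  · rfl
  have not_subset {k l : α} (hk : k ∈ T) (hkS : k ∉ S) (hlk : l ≠ k) : ¬ T ⊆ insert l S :=
    fun hTS => (mem_insert.mp (hTS hk)).elim (fun h => hlk h.symm) hkS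
  simp only [unanimityGame, if_neg (not_subset hj hjS hij), if_neg (not_subset hi hiS hij.symm)]

lemma sum_unanimityGame_moebiusTransform [Fintype α] (v : Finset α → M) :
    ∑ T, unanimityGame T (moebiusTransform v T) = v := by
  funext S
  simp only [Finset.sum_apply, unanimityGame, ← sum_filter]
  rw [← sum_Iic_moebiusTransform v S]
  congr 1
  ext T; simp

end Unanimity

section Swap
variable {α M : Type*} [DecidableEq α]

lemma map_swap_eq_self {i j : α} {S : Finset α} (h : i ∈ S ↔ j ∈ S) :
    S.map (Equiv.swap i j).toEmbedding = S := by
  ext k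
  rw [mem_map_equiv, Equiv.symm_swap, Equiv.swap_apply_def]
  split_ifs with hki hkj <;> simp_all

lemma apply_map_swap (v : Finset α → M) {i j : α}
    (h : ∀ S, i ∉ S → j ∉ S → v (insert i S) = v (insert j S)) (S : Finset α) :
    v (S.map (Equiv.swap i j).toEmbedding) = v S := by
  by_cases hij : i ∈ S ↔ j ∈ S
  · rw [map_swap_eq_self hij]
  wlog hi : i ∈ S generalizing i j
  · rw [Equiv.swap_comm]
    exact this (fun S hj hi => (h S hi hj).symm) (by tauto) (by tauto)
  obtain ⟨S, hiS, rfl⟩ : ∃ S', i ∉ S' ∧ S = insert i S' :=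
    ⟨S.erase i, notMem_erase i S, (insert_erase hi).symm⟩
  have hjS : j ∉ S := fun hj => hij ⟨fun _ => mem_insert_of_mem hj, fun _ => hi⟩
  rw [map_insert, Equiv.coe_toEmbedding, Equiv.swap_apply_left,
    map_swap_eq_self (by simp [hiS, hjS]), h S hiS hjS]

end Swap

section Axioms
variable {n m : ℕ} {Φ : (Finset (Fin n) → (Fin m → ℝ)) → (Fin n → Fin m → ℝ)}

lemma IsAdditive.map_zero (hA : IsAdditive n m Φ) : Φ 0 = 0 := by
  simpa using hA 0 0 rfl rfl 0 0

lemma IsAdditive.map_add (hA : IsAdditive n m Φ) {v w : Finset (Fin n) → Fin m → ℝ}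
    (hv : v ∅ = 0) (hw : w ∅ = 0) : Φ (v + w) = Φ v + Φ w := by
  simpa using hA v w hv hw 1 1

lemma IsAdditive.map_sum (hA : IsAdditive n m Φ) {ι : Type*} (s : Finset ι)
    (v : ι → Finset (Fin n) → Fin m → ℝ) (hv : ∀ t ∈ s, v t ∅ = 0) :
    Φ (∑ t ∈ s, v t) = ∑ t ∈ s, Φ (v t) := by
  classical
  induction s using Finset.induction_on with
  | empty => simpa using hA.map_zero
  | insert a s ha ih =>
    rw [sum_insert ha, sum_insert ha, hA.map_add (hv a (mem_insert_self a s)),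
      ih fun t ht => hv t (mem_insert_of_mem ht)]
    rw [Finset.sum_apply]
    exact sum_eq_zero fun t ht => hv t (mem_insert_of_mem ht)

lemma apply_unanimityGame (hE : IsEfficient n m Φ) (hS : IsSymmetric n m Φ)
    (hD : IsDummy n m Φ) {T : Finset (Fin n)} {c : Fin m → ℝ}
    (h0 : unanimityGame T c ∅ = 0) (i : Fin n) :
    Φ (unanimityGame T c) i = if i ∈ T then (#T : ℝ)⁻¹ • c else 0 := by
  have hnull : ∀ j ∉ T, Φ (unanimityGame T c) j = 0 := fun j hj =>
    hD _ h0 j fun S _ => unanimityGame_insert_of_notMem hj c S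
  split_ifs with hi
  swap
  · exact hnull i hi
  have hsymm : ∀ j ∈ T, Φ (unanimityGame T c) j = Φ (unanimityGame T c) i := fun j hj =>
    hS _ h0 j i fun S hjS hiS => unanimityGame_insert_of_mem hj hi hjS hiS c
  have hsum : #T • Φ (unanimityGame T c) i = c := by
    calc #T • Φ (unanimityGame T c) i = ∑ j ∈ T, Φ (unanimityGame T c) j := by
          rw [sum_congr rfl hsymm, sum_const]
      _ = ∑ j, Φ (unanimityGame T c) j :=
          sum_subset (subset_univ T) fun j _ hj => hnull j hj
      _ = c := by rw [hE _ h0, unanimityGame, if_pos (subset_univ T)]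
  have hT : (#T : ℝ) ≠ 0 := by exact_mod_cast (card_pos.mpr ⟨i, hi⟩).ne'
  rw [eq_inv_smul_iff₀ hT, Nat.cast_smul_eq_nsmul, hsum]

lemma apply_eq_sum_moebiusTransform (hE : IsEfficient n m Φ) (hS : IsSymmetric n m Φ)
    (hD : IsDummy n m Φ) (hA : IsAdditive n m Φ) {v : Finset (Fin n) → Fin m → ℝ}
    (hv : v ∅ = 0) (i : Fin n) :
    Φ v i = ∑ T with i ∈ T, (#T : ℝ)⁻¹ • moebiusTransform v T := by
  have h0 : ∀ T, unanimityGame T (moebiusTransform v T) ∅ = 0 := by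
    intro T
    rcases T.eq_empty_or_nonempty with rfl | hT
    · simpa [unanimityGame] using (moebiusTransform_bot v).trans hv
    · exact if_neg fun h => hT.ne_empty (subset_empty.mp h)
  conv_lhs => rw [← sum_unanimityGame_moebiusTransform v]
  rw [hA.map_sum _ _ fun T _ => h0 T, Finset.sum_apply, sum_filter]
  exact sum_congr rfl fun T _ => apply_unanimityGame hE hS hD (h0 T) i

end Axioms

section PermutationFormula
variable {n m : ℕ}

lemma notMem_preceding (π : Equiv.Perm (Fin n)) (i : Fin n) : i ∉ preceding n π i := by
  simp [preceding]

lemma preceding_mul_apply (σ π : Equiv.Perm (Fin n)) (i : Fin n) :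
    preceding n (σ * π) (σ i) = (preceding n π i).map σ.toEmbedding := by
  ext k
  simp [preceding, mem_map_equiv, Equiv.Perm.mul_def]

lemma sum_marginal_preceding {M : Type*} [AddCommGroup M] (v : Finset (Fin n) → M)
    (π : Equiv.Perm (Fin n)) :
    ∑ i, (v (insert i (preceding n π i)) - v (preceding n π i)) = v univ - v ∅ := by
  let seg : ℕ → Finset (Fin n) := fun t => {j | (π.symm j : ℕ) < t}
  have hseg (k : Fin n) : preceding n π (π k) = seg k := by
    ext j
    simp only [preceding, seg, mem_filter, mem_univ, true_and, Equiv.symm_apply_apply, Fin.lt_def]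
  have hseg_succ (k : Fin n) : insert (π k) (seg k) = seg (k + 1) := by
    ext j
    simp only [seg, mem_insert, mem_filter, mem_univ, true_and, ← Equiv.symm_apply_eq,
      Fin.ext_iff]
    omega
  rw [← Equiv.sum_comp π]
  simp only [hseg, hseg_succ]
  rw [Fin.sum_univ_eq_sum_range (fun k => v (seg (k + 1)) - v (seg k)),
    sum_range_sub (fun t => v (seg t))]
  congr 2 <;> ext j <;> simp [seg]

lemma permShap_isEfficient : IsEfficient n m (permShap n m) := by
  intro v hv
  simp only [permShap, ← smul_sum]
  rw [sum_comm]
  simp only [sum_marginal_preceding, hv, sub_zero, sum_const, card_univ, Fintype.card_perm,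
    Fintype.card_fin]
  rw [← Nat.cast_smul_eq_nsmul ℝ, smul_smul, inv_mul_cancel₀ (by positivity), one_smul]

lemma permShap_isSymmetric : IsSymmetric n m (permShap n m) := by
  intro v _ i j hij
  simp only [permShap]
  congr 1
  refine Fintype.sum_equiv (Equiv.mulLeft (Equiv.swap i j)) _ _ fun π => ?_
  have hP := preceding_mul_apply (Equiv.swap i j) π i
  rw [Equiv.swap_apply_left] at hP
  have hPi : insert j ((preceding n π i).map (Equiv.swap i j).toEmbedding) =
      (insert i (preceding n π i)).map (Equiv.swap i j).toEmbedding := by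
    rw [map_insert, Equiv.coe_toEmbedding, Equiv.swap_apply_left]
  rw [Equiv.coe_mulLeft, hP, hPi, apply_map_swap v hij, apply_map_swap v hij]

lemma permShap_isDummy : IsDummy n m (permShap n m) := by
  intro v _ i hi
  simp [permShap, hi _ (notMem_preceding _ i)]

lemma permShap_isAdditive : IsAdditive n m (permShap n m) := by
  intro v w _ _ α β
  funext i
  simp only [permShap, Pi.add_apply, Pi.smul_apply, smul_sum, ← sum_add_distrib]
  exact sum_congr rfl fun π _ => by module

end PermutationFormula

theorem vector_valued_Shapley_existence_uniqueness_general (n m : ℕ) :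
    (∃ Φ : (Finset (Fin n) → (Fin m → ℝ)) → (Fin n → Fin m → ℝ),
      IsEfficient n m Φ ∧ IsSymmetric n m Φ ∧ IsDummy n m Φ ∧ IsAdditive n m Φ ∧
      ∀ v : Finset (Fin n) → (Fin m → ℝ), v ∅ = 0 →
        ∀ i : Fin n, Φ v i = permShap n m v i) ∧
    (∀ Φ : (Finset (Fin n) → (Fin m → ℝ)) → (Fin n → Fin m → ℝ),
      IsEfficient n m Φ → IsSymmetric n m Φ → IsDummy n m Φ → IsAdditive n m Φ →
      ∀ v : Finset (Fin n) → (Fin m → ℝ), v ∅ = 0 →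
        ∀ i : Fin n, Φ v i = permShap n m v i) := by
  refine ⟨⟨permShap n m, permShap_isEfficient, permShap_isSymmetric, permShap_isDummy,
    permShap_isAdditive, fun _ _ _ => rfl⟩, fun Φ hE hS hD hA v hv i => ?_⟩
  rw [apply_eq_sum_moebiusTransform hE hS hD hA hv, apply_eq_sum_moebiusTransform
    permShap_isEfficient permShap_isSymmetric permShap_isDummy permShap_isAdditive hv]

/-- **Existence and uniqueness of the vector-valued Shapley operator.**
There exists a vector-valued value operator satisfying efficiency, symmetry, dummy, and
additivity, given on every game by the permutation formula; moreover any operator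
satisfying the four axioms coincides with the permutation formula on every game. -/
theorem vector_valued_Shapley_existence_uniqueness (n m : ℕ) (hn : 0 < n) (hm : 0 < m) :
    (∃ Φ : (Finset (Fin n) → (Fin m → ℝ)) → (Fin n → Fin m → ℝ),
      IsEfficient n m Φ ∧ IsSymmetric n m Φ ∧ IsDummy n m Φ ∧ IsAdditive n m Φ ∧
      ∀ v : Finset (Fin n) → (Fin m → ℝ), v ∅ = 0 →
        ∀ i : Fin n, Φ v i = permShap n m v i) ∧
    (∀ Φ : (Finset (Fin n) → (Fin m → ℝ)) → (Fin n → Fin m → ℝ),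
      IsEfficient n m Φ → IsSymmetric n m Φ → IsDummy n m Φ → IsAdditive n m Φ →
      ∀ v : Finset (Fin n) → (Fin m → ℝ), v ∅ = 0 →
        ∀ i : Fin n, Φ v i = permShap n m v i) :=
  vector_valued_Shapley_existence_uniqueness_general n m
end

section
/- Efficiency of SHAP values (exact reconstruction of the prediction): Let n, m be positive integers, let μ = μ₁ ⊗ ⋯ ⊗ μₙ be a product probability measure on ℝⁿ (so that the background features are independent and conditional expectations reduce to partial integration), let f : ℝⁿ → ℝᵐ be measurable and μ-integrable, and fix x ∈ ℝⁿ. Define the game v_f ∈ 𝒢ₙᵐ by v_f(S) = ∫ f(z_{S,x}(y)) dμ(y) − ∫ f dμ, where z_{S,x}(y) is the vector whose j-th coordinate is xⱼ for j ∈ S and yⱼ for j ∉ S (assume each such partial integral is finite). Then the SHAP values φᵢ(f;x) := Σ_{S ⊆ [n]∖{i}} (|S|!(n−|S|−1)!/n!) [v_f(S ∪ {i}) − v_f(S)] satisfy f(x) − ∫ f dμ = Σᵢ₌₁ⁿ φᵢ(f;x). -/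
open Finset MeasureTheory

/-- The Shapley weight `w(S) = |S|!(n−|S|−1)!/n!` (as a function of `s = |S|`). -/
noncomputable def shapWeight (n s : ℕ) : ℝ :=
  (Nat.factorial s : ℝ) * (Nat.factorial (n - s - 1) : ℝ) / (Nat.factorial n : ℝ)

/-- The vector-valued Shapley operator in combinatorial (subset) form. -/
noncomputable def subsetShapOp (n m : ℕ) (v : Finset (Fin n) → (Fin m → ℝ)) :
    Fin n → Fin m → ℝ :=
  fun i => ∑ S ∈ ((Finset.univ : Finset (Fin n)).erase i).powerset,
    shapWeight n S.card • (v (insert i S) - v S)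

/-- The hybrid vector `z_{S,x}(y)`, equal to `x` on the coordinates in `S` and to `y`
elsewhere. -/
def hybrid {n : ℕ} (S : Finset (Fin n)) (x y : Fin n → ℝ) : Fin n → ℝ :=
  fun j => if j ∈ S then x j else y j

lemma shapW_mid (n k : ℕ) (h1 : 0 < k) (h2 : k < n) :
    (k : ℝ) * shapWeight n (k - 1) = ((n - k : ℕ) : ℝ) * shapWeight n k := by
  obtain ⟨j, rfl⟩ : ∃ j, k = j + 1 := ⟨k - 1, by omega⟩
  obtain ⟨l, hl⟩ : ∃ l, n - (j + 1) = l + 1 := ⟨n - (j+1) - 1, by omega⟩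
  unfold shapWeight
  rw [show j + 1 - 1 = j from rfl, show n - j - 1 = l + 1 by omega,
    show n - (j + 1) - 1 = l by omega, hl]
  push_cast [Nat.factorial_succ]
  ring

lemma shapW_top (n : ℕ) (h : 0 < n) : (n : ℝ) * shapWeight n (n - 1) = 1 := by
  obtain ⟨j, rfl⟩ : ∃ j, n = j + 1 := ⟨n - 1, by omega⟩
  unfold shapWeight
  rw [show j + 1 - 1 = j from rfl, show j + 1 - j - 1 = 0 by omega]
  have h1 := Nat.factorial_ne_zero j
  have h2 : ((j + 1).factorial : ℝ) ≠ 0 := Nat.cast_ne_zero.mpr (Nat.factorial_ne_zero _)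
  push_cast [Nat.factorial_succ, Nat.factorial_zero] at *
  field_simp

lemma shapW_bot (n : ℕ) (h : 0 < n) : (n : ℝ) * shapWeight n 0 = 1 := by
  obtain ⟨j, rfl⟩ : ∃ j, n = j + 1 := ⟨n - 1, by omega⟩
  unfold shapWeight
  rw [show j + 1 - 0 - 1 = j by omega]
  have h1 := Nat.factorial_ne_zero j
  have h2 : ((j + 1).factorial : ℝ) ≠ 0 := Nat.cast_ne_zero.mpr (Nat.factorial_ne_zero _)
  push_cast [Nat.factorial_succ, Nat.factorial_zero] at *
  field_simp

lemma shap_sum (n m : ℕ) (hn : 0 < n) (v : Finset (Fin n) → (Fin m → ℝ)) :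
    ∑ i : Fin n, subsetShapOp n m v i = v Finset.univ - v ∅ := by
  have hps : ∀ i : Fin n, ((Finset.univ : Finset (Fin n)).erase i).powerset
      = Finset.univ.filter (fun S => i ∉ S) := by
    intro i; ext S; simp [Finset.subset_erase]
  have step1 : ∀ i : Fin n, subsetShapOp n m v i
      = (∑ T ∈ Finset.univ.filter (fun T : Finset (Fin n) => i ∈ T),
          shapWeight n (T.card - 1) • v T)
        - ∑ S ∈ Finset.univ.filter (fun S : Finset (Fin n) => i ∉ S),
          shapWeight n S.card • v S := by
    intro i
    unfold subsetShapOp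
    rw [hps]
    rw [show (∑ S ∈ Finset.univ.filter (fun S : Finset (Fin n) => i ∉ S),
        shapWeight n S.card • (v (insert i S) - v S))
      = (∑ S ∈ Finset.univ.filter (fun S : Finset (Fin n) => i ∉ S),
          shapWeight n S.card • v (insert i S))
        - ∑ S ∈ Finset.univ.filter (fun S : Finset (Fin n) => i ∉ S),
          shapWeight n S.card • v S by
      rw [← Finset.sum_sub_distrib]; exact Finset.sum_congr rfl fun S _ => smul_sub _ _ _]
    congr 1
    apply Finset.sum_nbij' (fun S => insert i S) (fun T => T.erase i)
    · intro S hS; simp_all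
    · intro T hT; simp_all
    · intro S hS; simp only [Finset.mem_filter, Finset.mem_univ, true_and] at hS
      simp [Finset.erase_insert hS]
    · intro T hT; simp only [Finset.mem_filter, Finset.mem_univ, true_and] at hT
      simp [Finset.insert_erase hT]
    · intro S hS; simp only [Finset.mem_filter, Finset.mem_univ, true_and] at hS
      rw [Finset.card_insert_of_notMem hS]
      simp
  rw [Finset.sum_congr rfl fun i _ => step1 i, Finset.sum_sub_distrib]
  have swap1 : (∑ i : Fin n, ∑ T ∈ Finset.univ.filter (fun T : Finset (Fin n) => i ∈ T),
      shapWeight n (T.card - 1) • v T)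
      = ∑ T : Finset (Fin n), ((T.card : ℝ) * shapWeight n (T.card - 1)) • v T := by
    simp_rw [Finset.sum_filter]
    rw [Finset.sum_comm]
    refine Finset.sum_congr rfl fun T _ => ?_
    rw [← Finset.sum_filter,
      show Finset.univ.filter (fun i : Fin n => i ∈ T) = T by ext i; simp,
      Finset.sum_const, ← Nat.cast_smul_eq_nsmul ℝ, smul_smul]
  have swap2 : (∑ i : Fin n, ∑ S ∈ Finset.univ.filter (fun S : Finset (Fin n) => i ∉ S),
      shapWeight n S.card • v S)
      = ∑ S : Finset (Fin n), (((n - S.card : ℕ) : ℝ) * shapWeight n S.card) • v S := by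
    simp_rw [Finset.sum_filter]
    rw [Finset.sum_comm]
    refine Finset.sum_congr rfl fun S _ => ?_
    rw [← Finset.sum_filter,
      show Finset.univ.filter (fun i : Fin n => i ∉ S) = Sᶜ by ext i; simp,
      Finset.sum_const, ← Nat.cast_smul_eq_nsmul ℝ, smul_smul,
      Finset.card_compl, Fintype.card_fin]
  rw [swap1, swap2, ← Finset.sum_sub_distrib]
  have key : ∀ T : Finset (Fin n),
      ((T.card : ℝ) * shapWeight n (T.card - 1)) • v T
        - (((n - T.card : ℕ) : ℝ) * shapWeight n T.card) • v T
      = (if T = (Finset.univ : Finset (Fin n)) then v Finset.univ else 0)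
        + (if T = (∅ : Finset (Fin n)) then -v ∅ else 0) := by
    intro T
    by_cases hu : T = Finset.univ
    · subst hu
      have hne : (Finset.univ : Finset (Fin n)) ≠ ∅ := by
        simp [Finset.univ_eq_empty_iff, Fintype.card_fin]
        exact Fin.pos_iff_nonempty.mp hn
      rw [if_pos rfl, if_neg hne, Finset.card_univ, Fintype.card_fin]
      rw [Nat.sub_self, Nat.cast_zero, zero_mul, zero_smul, sub_zero, shapW_top n hn]
      simp
    · by_cases he : T = ∅
      · subst he
        rw [if_neg hu, if_pos rfl]
        simp only [Finset.card_empty, Nat.cast_zero, zero_mul, zero_smul, Nat.sub_zero]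
        rw [shapW_bot n hn]
        simp
      · rw [if_neg hu, if_neg he]
        have h1 : 0 < T.card := Finset.card_pos.mpr (Finset.nonempty_iff_ne_empty.mpr he)
        have h2 : T.card < n := by
          have := Finset.card_lt_card (Finset.ssubset_univ_iff.mpr hu)
          simpa [Finset.card_univ, Fintype.card_fin] using this
        rw [shapW_mid n T.card h1 h2]
        simp
  rw [Finset.sum_congr rfl fun T _ => key T, Finset.sum_add_distrib]
  rw [Finset.sum_ite_eq' Finset.univ Finset.univ (fun _ => v Finset.univ),
    Finset.sum_ite_eq' Finset.univ ∅ fun _ => -v ∅]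
  simp [sub_eq_add_neg]

/-- **Efficiency of SHAP values (exact reconstruction of the prediction).**
For a product probability measure `μ = μ₁ ⊗ ⋯ ⊗ μₙ` on `ℝⁿ`, a measurable,
`μ`-integrable predictor `f : ℝⁿ → ℝᵐ`, and an input `x`, the SHAP values of the
centered game `v_f(S) = ∫ f(z_{S,x}(y)) dμ(y) − ∫ f dμ` sum to
`f(x) − ∫ f dμ`. -/
theorem shap_efficiency (n m : ℕ) (hn : 0 < n) (hm : 0 < m)
    (μi : Fin n → Measure ℝ) [∀ j, IsProbabilityMeasure (μi j)]
    (f : (Fin n → ℝ) → (Fin m → ℝ)) (hmeas : Measurable f)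
    (hfint : Integrable f (Measure.pi μi)) (x : Fin n → ℝ)
    (hint : ∀ S : Finset (Fin n),
      Integrable (fun y : Fin n → ℝ => f (hybrid S x y)) (Measure.pi μi)) :
    f x - ∫ y, f y ∂(Measure.pi μi)
      = ∑ i : Fin n, subsetShapOp n m
          (fun S => (∫ y, f (hybrid S x y) ∂(Measure.pi μi)) - ∫ y, f y ∂(Measure.pi μi)) i := by
  rw [shap_sum n m hn]
  have h1 : ∀ y : Fin n → ℝ, hybrid (Finset.univ : Finset (Fin n)) x y = x := by
    intro y; funext j; simp [hybrid]
  have h2 : ∀ y : Fin n → ℝ, hybrid (∅ : Finset (Fin n)) x y = y := by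
    intro y; funext j; simp [hybrid]
  simp only [h1, h2]
  rw [integral_const]
  simp
end

section
/- No leakage across output coordinates: Let n, m be positive integers and let Φ : 𝒢ₙᵐ → (ℝᵐ)ⁿ be a value operator satisfying efficiency, symmetry, dummy, and additivity. Fix k ∈ {1,…,m}. Then for every scalar game g ∈ 𝒢ₙ, every player i ∈ {1,…,n}, and every output coordinate ℓ ≠ k, the ℓ-th coordinate of Φᵢ(ι_k g) is zero, where ι_k g is the vector-valued game defined by (ι_k g)(S) = g(S)·e_k with e_k the k-th standard basis vector of ℝᵐ. -/
open Finset

/-- The embedding `ι_k` of a scalar game into the `k`-th coordinate: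
`(ι_k g)(S) = g(S)·e_k`. -/
def iota (n m : ℕ) (k : Fin m) (g : Finset (Fin n) → ℝ) :
    Finset (Fin n) → (Fin m → ℝ) :=
  fun S => Pi.single k (g S)

lemma mobius_aux {α : Type*} [DecidableEq α] (g : Finset α → ℝ) (S : Finset α) :
    ∑ T ∈ S.powerset, ∑ R ∈ T.powerset, (-1:ℝ)^(T.card - R.card) * g R = g S := by
  rw [Finset.sum_comm' (s' := fun R => S.powerset.filter (fun T => R ⊆ T)) (t' := S.powerset)
    (fun T R => by
      simp only [Finset.mem_powerset, Finset.mem_filter]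
      exact ⟨fun ⟨h1, h2⟩ => ⟨⟨h1, h2⟩, h2.trans h1⟩, fun ⟨⟨h1, h2⟩, _⟩ => ⟨h1, h2⟩⟩)]
  have key : ∀ R ∈ S.powerset,
      (∑ T ∈ S.powerset.filter (fun T => R ⊆ T), (-1:ℝ)^(T.card - R.card) * g R)
        = if S = R then g R else 0 := by
    intro R hR
    rw [Finset.mem_powerset] at hR
    rw [← Finset.sum_mul]
    have hsum : (∑ T ∈ S.powerset.filter (fun T => R ⊆ T), (-1:ℝ)^(T.card - R.card))
        = ∑ U ∈ (S \ R).powerset, (-1:ℝ)^U.card := by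
      apply Finset.sum_nbij' (fun T => T \ R) (fun U => R ∪ U)
      · intro T hT
        simp only [Finset.mem_filter, Finset.mem_powerset] at hT ⊢
        exact sdiff_subset_sdiff hT.1 le_rfl
      · intro U hU
        simp only [Finset.mem_powerset] at hU
        simp only [Finset.mem_filter, Finset.mem_powerset]
        exact ⟨Finset.union_subset hR ((hU.trans (Finset.sdiff_subset))), Finset.subset_union_left⟩
      · intro T hT
        simp only [Finset.mem_filter, Finset.mem_powerset] at hT
        exact Finset.union_sdiff_of_subset hT.2
      · intro U hU
        simp only [Finset.mem_powerset] at hU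
        have : Disjoint R U := Finset.disjoint_of_subset_right hU Finset.disjoint_sdiff
        rw [Finset.union_sdiff_cancel_left this]
      · intro T hT
        simp only [Finset.mem_filter, Finset.mem_powerset] at hT
        congr 1
        rw [Finset.card_sdiff_of_subset hT.2]
    have h2 : (∑ U ∈ (S \ R).powerset, (-1:ℝ)^U.card) = if S \ R = ∅ then 1 else 0 := by
      have h3 := Finset.sum_powerset_neg_one_pow_card (x := S \ R)
      have h4 : ((∑ U ∈ (S \ R).powerset, (-1:ℤ)^U.card : ℤ) : ℝ)
          = (∑ U ∈ (S \ R).powerset, (-1:ℝ)^U.card) := by push_cast; rfl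
      rw [← h4, h3]; split_ifs <;> simp
    rw [hsum, h2]
    have : S \ R = ∅ ↔ S = R := by
      rw [Finset.sdiff_eq_empty_iff_subset]
      exact ⟨fun h => le_antisymm h hR, fun h => h.le⟩
    split_ifs with h1 h2 h2
    · rw [one_mul]
    · exact absurd (this.1 h1) h2
    · exact absurd (this.2 h2) h1
    · rw [zero_mul]
  rw [Finset.sum_congr rfl key, Finset.sum_ite_eq S.powerset S g]
  simp

lemma unanimity_lemma (n m : ℕ)
    (Φ : (Finset (Fin n) → (Fin m → ℝ)) → (Fin n → Fin m → ℝ))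
    (heff : IsEfficient n m Φ) (hsym : IsSymmetric n m Φ)
    (hdum : IsDummy n m Φ) (k : Fin m)
    (T : Finset (Fin n)) (hT : T.Nonempty) (c : ℝ) :
    ∀ i : Fin n, ∀ l : Fin m, l ≠ k →
      Φ (iota n m k (fun S => if T ⊆ S then c else 0)) i l = 0 := by
  classical
  intro i l hl
  set v := iota n m k (fun S => if T ⊆ S then c else 0) with hv
  have hv0 : v ∅ = 0 := by
    have : ¬ T ⊆ (∅ : Finset (Fin n)) := by
      rw [Finset.subset_empty]; exact hT.ne_empty
    simp [hv, iota, this]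
  have hins : ∀ (j : Fin n) (S : Finset (Fin n)), j ∉ T → (T ⊆ insert j S ↔ T ⊆ S) := by
    intro j S hjT
    constructor
    · intro h x hx
      rcases Finset.mem_insert.1 (h hx) with h' | h'
      · exact absurd (h' ▸ hx) hjT
      · exact h'
    · exact fun h => h.trans (Finset.subset_insert _ _)
  have hdumout : ∀ j, j ∉ T → Φ v j = 0 := by
    intro j hjT
    apply hdum v hv0 j
    intro S _
    simp [hv, iota, hins j S hjT]
  by_cases hiT : i ∈ T
  · have hsymT : ∀ j ∈ T, Φ v j = Φ v i := by
      intro j hj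
      by_cases hji : j = i
      · rw [hji]
      · apply hsym v hv0 j i
        intro S hjS hiS
        have h1 : ¬ T ⊆ insert j S := by
          intro h
          rcases Finset.mem_insert.1 (h hiT) with h' | h'
          · exact hji h'.symm
          · exact hiS h'
        have h2 : ¬ T ⊆ insert i S := by
          intro h
          rcases Finset.mem_insert.1 (h hj) with h' | h'
          · exact hji h'
          · exact hjS h'
        simp [hv, iota, h1, h2]
    have heffv := heff v hv0
    have hvuniv : v Finset.univ = Pi.single k c := by
      simp [hv, iota, Finset.subset_univ]
    have hsplit : ∑ j ∈ T, Φ v j = ∑ j : Fin n, Φ v j :=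
      Finset.sum_subset (Finset.subset_univ T) (fun x _ hx => hdumout x hx)
    have hcardsmul : T.card • Φ v i = Pi.single k c := by
      rw [← Finset.sum_const, ← Finset.sum_congr rfl hsymT, hsplit, heffv, hvuniv]
    have hl0 : (T.card : ℝ) * Φ v i l = 0 := by
      have h5 := congrFun hcardsmul l
      simpa [Pi.single_eq_of_ne hl, nsmul_eq_mul] using h5
    have hcard : (T.card : ℝ) ≠ 0 := by
      exact_mod_cast hT.card_pos.ne'
    rcases mul_eq_zero.1 hl0 with h | h
    · exact absurd h hcard
    · exact h
  · have := hdumout i hiT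
    simp [this]

/-- **No leakage across output coordinates.**  If `Φ` satisfies efficiency, symmetry,
dummy, and additivity, then for every scalar game `g`, every player `i` and every output
coordinate `ℓ ≠ k`, the `ℓ`-th coordinate of `Φᵢ(ι_k g)` vanishes. -/
theorem no_leakage (n m : ℕ) (hn : 0 < n) (hm : 0 < m)
    (Φ : (Finset (Fin n) → (Fin m → ℝ)) → (Fin n → Fin m → ℝ))
    (heff : IsEfficient n m Φ) (hsym : IsSymmetric n m Φ)
    (hdum : IsDummy n m Φ) (hadd : IsAdditive n m Φ) (k : Fin m) :
    ∀ g : Finset (Fin n) → ℝ, g ∅ = 0 →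
      ∀ i : Fin n, ∀ l : Fin m, l ≠ k → Φ (iota n m k g) i l = 0 := by
  classical
  have hPhi0 : Φ 0 = 0 := by
    have h := hadd 0 0 rfl rfl 0 0
    simpa using h
  have hiota_add : ∀ a b : Finset (Fin n) → ℝ,
      iota n m k (a + b) = iota n m k a + iota n m k b := by
    intro a b; funext S
    simp [iota, Pi.single_add]
  have hPhi_add : ∀ v w : Finset (Fin n) → (Fin m → ℝ), v ∅ = 0 → w ∅ = 0 →
      Φ (v + w) = Φ v + Φ w := by
    intro v w hv hw
    have h := hadd v w hv hw 1 1
    simpa using h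
  intro g hg i l hl
  have hgdecomp : g = ∑ T ∈ (Finset.univ : Finset (Fin n)).powerset,
      (fun S => if T ⊆ S then (∑ R ∈ T.powerset, (-1:ℝ)^(T.card - R.card) * g R) else 0) := by
    funext S
    rw [Finset.sum_apply]
    rw [← Finset.sum_filter]
    have hfil : (Finset.univ : Finset (Fin n)).powerset.filter (fun T => T ⊆ S)
        = S.powerset := by
      ext T; simp [Finset.mem_powerset, Finset.subset_univ]
    rw [hfil]
    exact (mobius_aux g S).symm
  have hmain := Finset.sum_induction (s := (Finset.univ : Finset (Fin n)).powerset)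
    (fun T => (fun S => if T ⊆ S then (∑ R ∈ T.powerset, (-1:ℝ)^(T.card - R.card) * g R)
        else 0 : Finset (Fin n) → ℝ))
    (fun h => h ∅ = 0 ∧ ∀ i : Fin n, ∀ l : Fin m, l ≠ k → Φ (iota n m k h) i l = 0)
    (by
      rintro a b ⟨ha0, ha⟩ ⟨hb0, hb⟩
      refine ⟨by simp [Pi.add_apply, ha0, hb0], ?_⟩
      intro i l hl
      rw [hiota_add a b,
        hPhi_add (iota n m k a) (iota n m k b) (by simp [iota, ha0]) (by simp [iota, hb0])]
      simp [Pi.add_apply, ha i l hl, hb i l hl])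
    (by
      refine ⟨rfl, ?_⟩
      intro i l hl
      have h0 : iota n m k 0 = 0 := by funext S; simp [iota]
      rw [h0, hPhi0]
      simp)
    (by
      intro T _
      beta_reduce
      rcases T.eq_empty_or_nonempty with rfl | hT
      · have hzero : (fun S => if (∅ : Finset (Fin n)) ⊆ S
            then (∑ R ∈ (∅ : Finset (Fin n)).powerset,
              (-1:ℝ)^((∅ : Finset (Fin n)).card - R.card) * g R) else 0)
            = (0 : Finset (Fin n) → ℝ) := by
          funext S
          simp [hg]
        refine ⟨by simp [hg], ?_⟩
        intro i l hl
        rw [hzero]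
        have h0 : iota n m k 0 = 0 := by funext S; simp [iota]
        rw [h0, hPhi0]
        simp
      · refine ⟨?_, ?_⟩
        · have : ¬ T ⊆ (∅ : Finset (Fin n)) := by
            rw [Finset.subset_empty]; exact hT.ne_empty
          simp [this]
        · intro i l hl
          exact unanimity_lemma n m Φ heff hsym hdum k T hT _ i l hl)
  rw [hgdecomp]
  exact hmain.2 i l hl
end

section
/- SHAP values of a linear model with independent features: Let n, m be positive integers, let μ = μ₁ ⊗ ⋯ ⊗ μₙ be a product probability measure on ℝⁿ whose factors μⱼ each have finite first moment with mean mⱼ, and let f(x) = B₀ + Bᵀx with B₀ ∈ ℝᵐ and B ∈ ℝⁿˣᵐ. Fix x ∈ ℝⁿ and define the game v_f(S) = ∫ f(z_{S,x}(y)) dμ(y) − ∫ f dμ, where z_{S,x}(y) equals x on coordinates in S and y elsewhere (under independence this coincides with the centered conditional expectation E[f(X) | X_S = x_S] − E[f(X)]). Then for every i ∈ {1,…,n}, the SHAP value φᵢ(f;x) := Σ_{S ⊆ [n]∖{i}} (|S|!(n−|S|−1)!/n!) [v_f(S ∪ {i}) − v_f(S)] equals Bᵢ(xᵢ − mᵢ)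 ∈ ℝᵐ, where Bᵢ is the i-th row of B. -/
open Finset MeasureTheory

/-- The linear predictor `f(x) = B₀ + Bᵀx`, where `B : ℝⁿˣᵐ` has rows
`Bⱼ ∈ ℝᵐ` and `Bᵀx = Σⱼ xⱼ Bⱼ`. -/
def linearModel (n m : ℕ) (B0 : Fin m → ℝ) (B : Fin n → (Fin m → ℝ)) (x : Fin n → ℝ) :
    Fin m → ℝ :=
  B0 + ∑ j : Fin n, x j • B j

/-!
Under a product measure each coordinate integrates separately, so by linearity the game is
additive: `v(S) = ∑_{j ∈ S} (xⱼ - mⱼ) Bⱼ`. Every marginal contribution of `i` is then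
`(xᵢ - mᵢ) Bᵢ`, and the Shapley weights over the subsets of `[n] \ {i}` sum to one: the
`C(n-1, s)` subsets of size `s` each carry weight `s! (n-1-s)! / n!`, i.e. `1/n` in total.
-/

open Nat

lemma sum_powerset_shapWeight {α : Type*} {n : ℕ} (s : Finset α) (hs : #s + 1 = n) :
    ∑ T ∈ s.powerset, shapWeight n #T = 1 := by
  subst hs
  have hterm : ∀ k ∈ range (#s + 1),
      (#s).choose k • shapWeight (#s + 1) k = 1 / (#s + 1 : ℝ) := by
    intro k hk
    have hk : k ≤ #s := Nat.lt_succ_iff.mp (mem_range.mp hk)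
    have hfac : ((#s).choose k * k ! * (#s - k)! : ℝ) = (#s)! := by
      exact_mod_cast Nat.choose_mul_factorial_mul_factorial hk
    rw [shapWeight, nsmul_eq_mul, Nat.factorial_succ, show #s + 1 - k - 1 = #s - k by omega]
    push_cast
    field_simp
    linear_combination hfac
  rw [sum_powerset_apply_card, sum_congr rfl hterm, sum_const, card_range, nsmul_eq_mul]
  push_cast
  field_simp

lemma subsetShapOp_sum {n m : ℕ} (a : Fin n → Fin m → ℝ) (i : Fin n) :
    subsetShapOp n m (fun S => ∑ j ∈ S, a j) i = a i := by
  have hmarginal : ∀ S ∈ (univ.erase i).powerset,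
      shapWeight n #S • (∑ j ∈ insert i S, a j - ∑ j ∈ S, a j) = shapWeight n #S • a i := by
    intro S hS
    have hiS : i ∉ S := fun h => (mem_erase.mp (mem_powerset.mp hS h)).1 rfl
    rw [sum_insert hiS, add_sub_cancel_right]
  have hcard : #(univ.erase i) + 1 = n := by
    rw [card_erase_of_mem (mem_univ i), Finset.card_univ, Fintype.card_fin]
    exact Nat.sub_add_cancel i.pos
  rw [subsetShapOp, sum_congr rfl hmarginal, ← sum_smul, sum_powerset_shapWeight _ hcard, one_smul]

lemma hybrid_empty {n : ℕ} (x y : Fin n → ℝ) : hybrid ∅ x y = y := by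
  funext j
  simp [hybrid]

lemma linearModel_hybrid_sub {n m : ℕ} (B0 : Fin m → ℝ) (B : Fin n → Fin m → ℝ)
    (S : Finset (Fin n)) (x y : Fin n → ℝ) :
    linearModel n m B0 B (hybrid S x y) - linearModel n m B0 B y
      = ∑ j ∈ S, (x j - y j) • B j := by
  simp only [linearModel, hybrid, add_sub_add_left_eq_sub, ← sum_sub_distrib, ← sub_smul]
  rw [← sum_subset (subset_univ S)]
  · refine sum_congr rfl fun j hj => by rw [if_pos hj]
  · intro j _ hj
    rw [if_neg hj, sub_self, zero_smul]

section Integral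

variable {n : ℕ} (μi : Fin n → Measure ℝ) [∀ j, IsProbabilityMeasure (μi j)]

lemma integrable_hybrid_apply (hmom : ∀ j, Integrable (fun t : ℝ => t) (μi j))
    (S : Finset (Fin n)) (x : Fin n → ℝ) (j : Fin n) :
    Integrable (fun y => hybrid S x y j) (Measure.pi μi) := by
  by_cases hj : j ∈ S
  · simp [hybrid, hj]
  · simpa [hybrid, hj] using integrable_eval (hmom j)

lemma integral_hybrid_apply (S : Finset (Fin n)) (x : Fin n → ℝ) (j : Fin n) :
    ∫ y, hybrid S x y j ∂Measure.pi μi = hybrid S x (fun k => ∫ t, t ∂μi k) j := by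
  by_cases hj : j ∈ S
  · simp [hybrid, hj]
  · simpa [hybrid, hj] using integral_eval

lemma integral_linearModel_hybrid {m : ℕ} (hmom : ∀ j, Integrable (fun t : ℝ => t) (μi j))
    (B0 : Fin m → ℝ) (B : Fin n → Fin m → ℝ) (S : Finset (Fin n)) (x : Fin n → ℝ) :
    ∫ y, linearModel n m B0 B (hybrid S x y) ∂Measure.pi μi
      = linearModel n m B0 B (hybrid S x fun k => ∫ t, t ∂μi k) := by
  have hterm : ∀ j ∈ (univ : Finset (Fin n)),
      Integrable (fun y => hybrid S x y j • B j) (Measure.pi μi) :=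
    fun j _ => (integrable_hybrid_apply μi hmom S x j).smul_const (B j)
  simp only [linearModel]
  rw [integral_add (integrable_const B0) (integrable_finsetSum _ hterm), integral_const,
    probReal_univ, one_smul, integral_finsetSum _ hterm]
  refine congrArg _ (sum_congr rfl fun j _ => ?_)
  rw [integral_smul_const, integral_hybrid_apply]

end Integral

theorem shap_linear_independent_general (n m : ℕ)
    (μi : Fin n → Measure ℝ) [∀ j, IsProbabilityMeasure (μi j)]
    (hmom : ∀ j, Integrable (fun t : ℝ => t) (μi j))
    (B0 : Fin m → ℝ) (B : Fin n → (Fin m → ℝ)) (x : Fin n → ℝ) :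
    ∀ i : Fin n,
      subsetShapOp n m
        (fun S =>
          (∫ y, linearModel n m B0 B (hybrid S x y) ∂(Measure.pi μi))
            - ∫ y, linearModel n m B0 B y ∂(Measure.pi μi)) i
      = (x i - ∫ t, t ∂(μi i)) • B i := by
  intro i
  have hmean := integral_linearModel_hybrid μi hmom B0 B ∅ x
  simp only [hybrid_empty] at hmean
  have hgame : ∀ S : Finset (Fin n),
      (∫ y, linearModel n m B0 B (hybrid S x y) ∂(Measure.pi μi))
          - ∫ y, linearModel n m B0 B y ∂(Measure.pi μi)
        = ∑ j ∈ S, (x j - ∫ t, t ∂(μi j)) • B j := by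
    intro S
    rw [integral_linearModel_hybrid μi hmom, hmean, linearModel_hybrid_sub]
  simp only [hgame]
  exact subsetShapOp_sum _ i

/-- **SHAP values of a linear model with independent features.**  For a product
probability measure `μ = μ₁ ⊗ ⋯ ⊗ μₙ` whose factors have finite first moments
`mⱼ = ∫ t dμⱼ`, the SHAP value of feature `i` for the linear predictor
`f(x) = B₀ + Bᵀx` at `x`, computed from the game
`v_f(S) = ∫ f(z_{S,x}(y)) dμ(y) − ∫ f dμ`, equals `Bᵢ(xᵢ − mᵢ)`. -/
theorem shap_linear_independent (n m : ℕ) (hn : 0 < n) (hm : 0 < m)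
    (μi : Fin n → Measure ℝ) [∀ j, IsProbabilityMeasure (μi j)]
    (hmom : ∀ j, Integrable (fun t : ℝ => t) (μi j))
    (B0 : Fin m → ℝ) (B : Fin n → (Fin m → ℝ)) (x : Fin n → ℝ) :
    ∀ i : Fin n,
      subsetShapOp n m
        (fun S =>
          (∫ y, linearModel n m B0 B (hybrid S x y) ∂(Measure.pi μi))
            - ∫ y, linearModel n m B0 B y ∂(Measure.pi μi)) i
      = (x i - ∫ t, t ∂(μi i)) • B i :=
  shap_linear_independent_general n m μi hmom B0 B x
end

section
/- SHAP values of a linear model with correlated Gaussian features (game-level form): Let n, m be positive integers, let Σ ∈ ℝⁿˣⁿ be a positive-definite matrix, and for each nonempty S ⊆ [n] let A_S := Σ_{:,S} Σ_{S,S}⁻¹ ∈ ℝⁿˣ|S| (where Σ_{S,S} is the principal submatrix of Σ indexed by S and Σ_{:,S} the columns of Σ indexed by S), and let Â_S ∈ ℝⁿˣⁿ be the matrix obtained by embedding A_S into the full coordinate space with zero columns outside S; set Â_∅ := 0. Given B ∈ ℝⁿˣᵐ and x, μ ∈ ℝⁿ, the vector-valued game v(S) := Bᵀ Â_S (x − μ)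 satisfies v(∅) = 0, and for every i ∈ {1,…,n} its Shapley value φᵢ(v) := Σ_{S ⊆ [n]∖{i}} (|S|!(n−|S|−1)!/n!) [v(S ∪ {i}) − v(S)] equals Bᵀ Mᵢ(Σ)(x − μ) ∈ ℝᵐ, where Mᵢ(Σ) := Σ_{S ⊆ [n]∖{i}} (|S|!(n−|S|−1)!/n!) (Â_{S∪{i}} − Â_S) ∈ ℝⁿˣⁿ. In the Gaussian model X ∼ N(μ, Σ) with f(x) = B₀ + Bᵀx, this game is the centered conditional-expectation game v_f(S) = E[f(X) | X_S = x_S] − E[f(X)], and hence the SHAP values are φᵢ(f;x) = Bᵀ Mᵢ(Σ)(x − μ). -/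
open Finset Matrix

/-- The zero-padded conditional-expectation matrix `Â_S ∈ ℝⁿˣⁿ`: the embedding of
`A_S = Σ_{:,S} Σ_{S,S}⁻¹ ∈ ℝⁿˣ|S|` into the full coordinate space, with zero columns
outside `S` (in particular `Â_∅ = 0`). -/
noncomputable def Ahat (n : ℕ) (Sg : Matrix (Fin n) (Fin n) ℝ) (S : Finset (Fin n)) :
    Matrix (Fin n) (Fin n) ℝ :=
  fun a b =>
    if h : b ∈ S then
      ((Sg.submatrix id (fun s : S => (s : Fin n))) *
        (Sg.submatrix (fun s : S => (s : Fin n)) (fun s : S => (s : Fin n)))⁻¹) a ⟨b, h⟩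
    else 0

/-- The matrix `Mᵢ(Σ) = Σ_{S ⊆ [n]∖{i}} w(S) (Â_{S∪{i}} − Â_S)`. -/
noncomputable def Mmat (n : ℕ) (Sg : Matrix (Fin n) (Fin n) ℝ) (i : Fin n) :
    Matrix (Fin n) (Fin n) ℝ :=
  ∑ S ∈ ((Finset.univ : Finset (Fin n)).erase i).powerset,
    shapWeight n S.card • (Ahat n Sg (insert i S) - Ahat n Sg S)

private lemma sum_mulVec' {ι α β : Type*} [Fintype β] (s : Finset ι)
    (f : ι → Matrix α β ℝ) (v : β → ℝ) :
    (∑ k ∈ s, f k).mulVec v = ∑ k ∈ s, (f k).mulVec v := by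
  funext a
  simp only [Matrix.mulVec, dotProduct, Finset.sum_apply, Matrix.sum_apply, Finset.sum_mul]
  rw [Finset.sum_comm]

private lemma mulVec_sum' {ι α β : Type*} [Fintype β] (M : Matrix α β ℝ) (s : Finset ι)
    (f : ι → β → ℝ) :
    M.mulVec (∑ k ∈ s, f k) = ∑ k ∈ s, M.mulVec (f k) := by
  funext a
  simp only [Matrix.mulVec, dotProduct, Finset.sum_apply, Finset.mul_sum]
  exact Finset.sum_comm

/-- **SHAP values of a linear model with correlated Gaussian features (game-level
form).**  For a positive-definite `Σ`, the vector-valued game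
`v(S) = Bᵀ Â_S (x − μ)` satisfies `v(∅) = 0`, and its Shapley value for player `i`
equals `Bᵀ Mᵢ(Σ)(x − μ)`. -/
theorem shap_linear_correlated (n m : ℕ) (hn : 0 < n) (hm : 0 < m)
    (Sg : Matrix (Fin n) (Fin n) ℝ) (hSg : Sg.PosDef)
    (B : Matrix (Fin n) (Fin m) ℝ) (x μ : Fin n → ℝ) :
    (fun S : Finset (Fin n) => Bᵀ.mulVec ((Ahat n Sg S).mulVec (x - μ))) ∅ = 0 ∧
    ∀ i : Fin n,
      subsetShapOp n m
        (fun S : Finset (Fin n) => Bᵀ.mulVec ((Ahat n Sg S).mulVec (x - μ))) i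
      = Bᵀ.mulVec ((Mmat n Sg i).mulVec (x - μ)) := by
  have hempty : Ahat n Sg (∅ : Finset (Fin n)) = 0 := by
    funext a b; simp [Ahat]
  constructor
  · simp [hempty]
  · intro i
    funext j
    simp only [subsetShapOp, Mmat, sum_mulVec', mulVec_sum',
      Matrix.smul_mulVec, Matrix.sub_mulVec, Matrix.mulVec_smul, Matrix.mulVec_sub,
      Finset.sum_apply, Pi.smul_apply, Pi.sub_apply, smul_eq_mul]
    rw [← Finset.sum_sub_distrib]
    exact Finset.sum_congr rfl fun S _ => by ring
end
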